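/- arXiv:1712.08672 — 2 statements merged into one kernel-verified Lean document; each statement's English description precedes it below -/
import Mathlib

section
/- Let W ∈ ℕ be even and positive and let T ∈ ℕ with W ≤ T. For every causal policy π in the two-link adversarial network model over horizon T, there exists a network-event sequence ω such that: (i) some feasible action sequence (a*, b*) for ω has total utility Σ_{t=0}^{T−1}(a*₁(t) + a*₂(t)) = 2W, final queues Q*₁(T) = Q*₂(T) = 0, and satisfies the W-window constraint Σ_{τ=t}^{t+W−1} a*_i(τ) ≤ Σ_{τ=t}^{t+W−1} b*_i(τ) for every i ∈ {1,2} and every t with t + W ≤ T (so ω is W-constrained), while every feasible action sequence for ω has total utility at most 2W; and (ii) letting (a^π, b^π, Q^π) be the actions and queues produced by π on ω, (2W − Σ_{t=0}^{T−1}(a₁^π(t) + a₂^π(t))) + Q₁^π(T) + Q₂^π(T) ≥ W/2. -/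
open Finset

/-- A network-event sequence in the two-link adversarial model: each slot `t` has
nonnegative arrival capacities `A i t` and channel rates `S i t` for links `i = 0, 1`. -/
structure EventSeq where
  A : Fin 2 → ℕ → ℝ
  S : Fin 2 → ℕ → ℝ
  hA : ∀ i t, 0 ≤ A i t
  hS : ∀ i t, 0 ≤ S i t

/-- An action sequence: admissions `a i t` and services `b i t` for each link and slot. -/
structure ActionSeq where
  a : Fin 2 → ℕ → ℝ
  b : Fin 2 → ℕ → ℝ

/-- Feasibility of an action sequence for an event sequence over horizon `T`:
admissions respect arrival capacities, services respect channel rates, and at most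
one link is served in each slot. -/
def Feasible (T : ℕ) (ω : EventSeq) (α : ActionSeq) : Prop :=
  ∀ t < T, (∀ i, 0 ≤ α.a i t ∧ α.a i t ≤ ω.A i t ∧ 0 ≤ α.b i t ∧ α.b i t ≤ ω.S i t) ∧
    (α.b 0 t = 0 ∨ α.b 1 t = 0)

/-- Queue lengths generated by an action sequence: `Q i 0 = 0` and
`Q i (t+1) = max (Q i t + a i t − b i t) 0`. -/
def queue (α : ActionSeq) (i : Fin 2) : ℕ → ℝ
  | 0 => 0
  | t + 1 => max (queue α i t + α.a i t - α.b i t) 0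

/-- A policy is causal if whenever two event sequences agree on slots `0, …, t`,
the assigned actions agree on slot `t`. -/
def Causal (π : EventSeq → ActionSeq) : Prop :=
  ∀ ω ω' : EventSeq, ∀ t : ℕ,
    (∀ s ≤ t, ∀ i, ω.A i s = ω'.A i s ∧ ω.S i s = ω'.S i s) →
    ∀ i, (π ω).a i t = (π ω').a i t ∧ (π ω).b i t = (π ω').b i t

/-! ### Auxiliary definitions and lemmas -/

lemma queue_nonneg (α : ActionSeq) (i : Fin 2) : ∀ t, 0 ≤ queue α i t
  | 0 => le_refl 0
  | _ + 1 => le_max_right _ _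

lemma queue_succ (α : ActionSeq) (i : Fin 2) (t : ℕ) :
    queue α i (t + 1) = max (queue α i t + α.a i t - α.b i t) 0 := rfl

lemma sum_sub_le_queue (α : ActionSeq) (i : Fin 2) (T : ℕ) :
    ∑ t ∈ Finset.range T, (α.a i t - α.b i t) ≤ queue α i T := by
  induction T with
  | zero => simp [queue]
  | succ n ih =>
    rw [Finset.sum_range_succ, queue_succ]
    refine le_trans ?_ (le_max_left _ _)
    linarith

/-- The adversarial event sequence: in slots `t < k` both links get arrival capacity `2`
and both channels have rate `2`; in slots `k ≤ t < 2k` only link `j` has channel rate `2`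
(and no arrivals); everything is `0` afterwards. -/
def ev (k : ℕ) (j : Fin 2) : EventSeq where
  A := fun _ t => if t < k then 2 else 0
  S := fun i t => if t < k then 2 else if t < 2 * k ∧ i = j then 2 else 0
  hA := by
    intro i t
    split <;> norm_num
  hS := by
    intro i t
    split
    · norm_num
    · split <;> norm_num

/-- The optimal witness: admit everything in phase 1, serve link `≠ j` at full rate in
phase 1 (clearing its arrivals within each slot) and serve link `j` in phase 2. -/
def wit (k : ℕ) (j : Fin 2) : ActionSeq where
  a := fun _ t => if t < k then 2 else 0
  b := fun i t => if i = j then (if k ≤ t ∧ t < 2 * k then 2 else 0)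
                  else (if t < k then 2 else 0)

lemma wit_a (k : ℕ) (j i : Fin 2) (t : ℕ) :
    (wit k j).a i t = if t < k then 2 else 0 := rfl

lemma wit_b_self (k : ℕ) (j : Fin 2) (t : ℕ) :
    (wit k j).b j t = if k ≤ t ∧ t < 2 * k then 2 else 0 := if_pos rfl

lemma wit_b_ne (k : ℕ) (j i : Fin 2) (hij : i ≠ j) (t : ℕ) :
    (wit k j).b i t = if t < k then 2 else 0 := if_neg hij

lemma ev_A (k : ℕ) (j i : Fin 2) (t : ℕ) :
    (ev k j).A i t = if t < k then 2 else 0 := rfl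

lemma ev_S (k : ℕ) (j i : Fin 2) (t : ℕ) :
    (ev k j).S i t = if t < k then 2 else if t < 2 * k ∧ i = j then 2 else 0 := rfl

lemma wit_queue_ne (k : ℕ) (j i : Fin 2) (hij : i ≠ j) : ∀ t, queue (wit k j) i t = 0 := by
  intro t; induction t with
  | zero => rfl
  | succ n ih =>
    rw [queue_succ, ih, wit_a, wit_b_ne k j i hij]
    split <;> norm_num

lemma wit_queue_j_le (k : ℕ) (j : Fin 2) : ∀ t ≤ k, queue (wit k j) j t = 2 * t := by
  intro t; induction t with
  | zero => intro _; simp [queue]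
  | succ n ih =>
    intro h
    have hn : n < k := h
    rw [queue_succ, ih (le_of_lt hn), wit_a, wit_b_self, if_pos hn,
      if_neg (by omega : ¬(k ≤ n ∧ n < 2 * k)), sub_zero,
      max_eq_left (by positivity)]
    push_cast
    ring

lemma wit_queue_j_mid (k : ℕ) (j : Fin 2) :
    ∀ t, k ≤ t → t ≤ 2 * k → queue (wit k j) j t = 2 * (2 * (k : ℝ) - t) := by
  intro t ht
  induction t, ht using Nat.le_induction with
  | base =>
    intro _
    rw [wit_queue_j_le k j k le_rfl]
    push_cast; ring
  | succ n hn ih =>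
    intro h2
    have hn2 : n < 2 * k := h2
    have hnk : ¬ n < k := by omega
    rw [queue_succ, ih (by omega), wit_a, wit_b_self, if_neg hnk,
      if_pos (show k ≤ n ∧ n < 2 * k from ⟨hn, hn2⟩)]
    have hc : ((n : ℝ) + 1) ≤ 2 * k := by exact_mod_cast h2
    rw [max_eq_left (by linarith)]
    push_cast; ring

lemma wit_queue_j_end (k : ℕ) (j : Fin 2) : ∀ t, 2 * k ≤ t → queue (wit k j) j t = 0 := by
  intro t ht
  induction t, ht using Nat.le_induction with
  | base =>
    rw [wit_queue_j_mid k j (2 * k) (by omega) le_rfl]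
    push_cast; ring
  | succ n hn ih =>
    rw [queue_succ, ih, wit_a, wit_b_self, if_neg (by omega : ¬ n < k),
      if_neg (by omega : ¬(k ≤ n ∧ n < 2 * k))]
    norm_num

lemma sum_ite_lt (c : ℝ) {k T : ℕ} (h : k ≤ T) :
    ∑ t ∈ Finset.range T, (if t < k then c else 0) = k * c := by
  rw [Finset.range_eq_Ico, ← Finset.sum_Ico_consecutive _ (Nat.zero_le k) h]
  have h1 : ∀ t ∈ Finset.Ico 0 k, (if t < k then c else 0) = c :=
    fun t ht => if_pos (Finset.mem_Ico.mp ht).2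
  have h2 : ∀ t ∈ Finset.Ico k T, (if t < k then c else 0) = 0 :=
    fun t ht => if_neg (Nat.not_lt.mpr (Finset.mem_Ico.mp ht).1)
  rw [Finset.sum_congr rfl h1, Finset.sum_congr rfl h2, Finset.sum_const, Finset.sum_const]
  simp [mul_comm]

lemma fin2_cases (j : Fin 2) : j = 0 ∨ j = 1 := by
  fin_cases j
  · exact Or.inl rfl
  · exact Or.inr rfl

lemma wit_feasible (k T : ℕ) (j : Fin 2) : Feasible T (ev k j) (wit k j) := by
  intro t _
  constructor
  · intro i
    refine ⟨?_, ?_, ?_, ?_⟩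
    · rw [wit_a]; split <;> norm_num
    · rw [wit_a, ev_A]
    · by_cases hij : i = j
      · subst hij; rw [wit_b_self]; split <;> norm_num
      · rw [wit_b_ne k j i hij]; split <;> norm_num
    · by_cases hij : i = j
      · rw [hij, wit_b_self, ev_S]
        by_cases h1 : t < k
        · rw [if_pos h1, if_neg (by omega : ¬(k ≤ t ∧ t < 2 * k))]; norm_num
        · rw [if_neg h1]
          by_cases h2 : t < 2 * k
          · rw [if_pos (show t < 2 * k ∧ j = j from ⟨h2, rfl⟩),
              if_pos (show k ≤ t ∧ t < 2 * k from ⟨by omega, h2⟩)]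
          · rw [if_neg (show ¬(t < 2 * k ∧ j = j) from fun hc => h2 hc.1),
              if_neg (show ¬(k ≤ t ∧ t < 2 * k) from fun hc => h2 hc.2)]
      · rw [wit_b_ne k j i hij, ev_S]
        by_cases h1 : t < k
        · rw [if_pos h1, if_pos h1]
        · rw [if_neg h1, if_neg h1]
          split <;> norm_num
  · by_cases h : t < k
    · rcases fin2_cases j with hj | hj <;> subst hj
      · left
        rw [wit_b_self k 0 t]
        exact if_neg (by omega)
      · right
        rw [wit_b_self k 1 t]
        exact if_neg (by omega)
    · rcases fin2_cases j with hj | hj <;> subst hj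
      · right
        rw [wit_b_ne k 0 1 (by decide)]
        exact if_neg h
      · left
        rw [wit_b_ne k 1 0 (by decide)]
        exact if_neg h

lemma part_one (W k T : ℕ) (hk : W = 2 * k) (hT : W ≤ T) (j : Fin 2) :
    (∃ α, Feasible T (ev k j) α ∧
        (∑ t ∈ Finset.range T, (α.a 0 t + α.a 1 t)) = 2 * (W : ℝ) ∧
        queue α 0 T = 0 ∧ queue α 1 T = 0 ∧
        (∀ i : Fin 2, ∀ t : ℕ, t + W ≤ T →
          (∑ τ ∈ Finset.Ico t (t + W), α.a i τ) ≤ ∑ τ ∈ Finset.Ico t (t + W), α.b i τ)) ∧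
      (∀ α, Feasible T (ev k j) α →
        (∑ t ∈ Finset.range T, (α.a 0 t + α.a 1 t)) ≤ 2 * (W : ℝ)) := by
  have hkT : k ≤ T := by omega
  have h2kT : 2 * k ≤ T := by omega
  have hWk : (W : ℝ) = 2 * (k : ℝ) := by rw [hk]; push_cast; ring
  constructor
  · refine ⟨wit k j, wit_feasible k T j, ?_, ?_, ?_, ?_⟩
    · have hpt : ∀ t ∈ Finset.range T,
          (wit k j).a 0 t + (wit k j).a 1 t = (if t < k then (4:ℝ) else 0) := by
        intro t _
        simp only [wit]
        split <;> norm_num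
      rw [Finset.sum_congr rfl hpt, sum_ite_lt 4 hkT, hWk]
      ring
    · by_cases h0 : (0 : Fin 2) = j
      · rw [← h0] at *
        exact wit_queue_j_end k 0 T h2kT
      · exact wit_queue_ne k j 0 h0 T
    · by_cases h1 : (1 : Fin 2) = j
      · rw [← h1] at *
        exact wit_queue_j_end k 1 T h2kT
      · exact wit_queue_ne k j 1 h1 T
    · intro i t _
      by_cases hij : i = j
      · rw [hij,
          Finset.sum_congr rfl (fun τ _ => wit_a k j j τ),
          Finset.sum_congr rfl (fun τ _ => wit_b_self k j τ)]
        by_cases htk : k ≤ t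
        · -- window starts after all arrivals to queue i
          have ha : ∑ τ ∈ Finset.Ico t (t + W), (if τ < k then (2:ℝ) else 0) = 0 := by
            apply Finset.sum_eq_zero
            intro τ hτ
            exact if_neg (by have := (Finset.mem_Ico.mp hτ).1; omega)
          rw [ha]
          apply Finset.sum_nonneg
          intro τ _
          split <;> norm_num
        · push_neg at htk
          have htW : t + W = t + 2 * k := by omega
          have ha : ∑ τ ∈ Finset.Ico t (t + W), (if τ < k then (2:ℝ) else 0)
              ≤ 2 * (k : ℝ) := by
            rw [htW, ← Finset.sum_Ico_consecutive _ (le_of_lt htk) (by omega : k ≤ t + 2 * k)]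
            have e1 : ∀ τ ∈ Finset.Ico t k, (if τ < k then (2:ℝ) else 0) = 2 :=
              fun τ hτ => if_pos (Finset.mem_Ico.mp hτ).2
            have e2 : ∀ τ ∈ Finset.Ico k (t + 2 * k), (if τ < k then (2:ℝ) else 0) = 0 :=
              fun τ hτ => if_neg (Nat.not_lt.mpr (Finset.mem_Ico.mp hτ).1)
            rw [Finset.sum_congr rfl e1, Finset.sum_congr rfl e2, Finset.sum_const,
              Finset.sum_const, Nat.card_Ico, smul_zero, add_zero, nsmul_eq_mul]
            have h3 : ((k - t : ℕ) : ℝ) ≤ (k : ℝ) := by exact_mod_cast Nat.sub_le k t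
            linarith
          have hb : 2 * (k : ℝ)
              ≤ ∑ τ ∈ Finset.Ico t (t + W), (if k ≤ τ ∧ τ < 2 * k then (2:ℝ) else 0) := by
            have hsub : Finset.Ico k (2 * k) ⊆ Finset.Ico t (t + W) := by
              intro τ hτ
              have hτ' := Finset.mem_Ico.mp hτ
              exact Finset.mem_Ico.mpr ⟨by omega, by omega⟩
            have hval : ∑ τ ∈ Finset.Ico k (2 * k),
                (if k ≤ τ ∧ τ < 2 * k then (2:ℝ) else 0) = 2 * (k : ℝ) := by
              have e : ∀ τ ∈ Finset.Ico k (2 * k),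
                  (if k ≤ τ ∧ τ < 2 * k then (2:ℝ) else 0) = 2 := by
                intro τ hτ
                have hτ' := Finset.mem_Ico.mp hτ
                exact if_pos ⟨hτ'.1, hτ'.2⟩
              rw [Finset.sum_congr rfl e, Finset.sum_const, Nat.card_Ico]
              have : (2 * k - k : ℕ) = k := by omega
              rw [this]
              simp [mul_comm]
            rw [← hval]
            apply Finset.sum_le_sum_of_subset_of_nonneg hsub
            intro τ _ _
            split <;> norm_num
          exact le_trans ha hb
      · -- for queue i ≠ j arrivals are served in the same slot
        apply Finset.sum_le_sum
        intro τ _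
        rw [wit_a, wit_b_ne k j i hij]
  · intro α hα
    have hbound : ∀ t ∈ Finset.range T,
        α.a 0 t + α.a 1 t ≤ (if t < k then (4:ℝ) else 0) := by
      intro t ht
      have h := (hα t (Finset.mem_range.mp ht)).1
      have h0 := (h 0)
      have h1 := (h 1)
      simp only [ev] at h0 h1
      split_ifs at h0 h1 ⊢ <;> linarith [h0.1, h0.2.1, h1.1, h1.2.1]
    calc ∑ t ∈ Finset.range T, (α.a 0 t + α.a 1 t)
        ≤ ∑ t ∈ Finset.range T, (if t < k then (4:ℝ) else 0) := Finset.sum_le_sum hbound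
      _ = k * 4 := sum_ite_lt 4 hkT
      _ = 2 * (W : ℝ) := by rw [hk]; push_cast; ring

lemma policy_bound (W k T : ℕ) (hk : W = 2 * k) (hT : W ≤ T) (j i : Fin 2) (hij : i ≠ j)
    (α : ActionSeq) (hα : Feasible T (ev k j) α) :
    2 * (W : ℝ) - (∑ t ∈ Finset.range k, α.a j t) - (∑ t ∈ Finset.range k, α.b i t)
      ≤ (2 * (W : ℝ) - ∑ t ∈ Finset.range T, (α.a 0 t + α.a 1 t))
          + queue α 0 T + queue α 1 T := by
  have hkT : k ≤ T := by omega
  have haz : ∀ i' : Fin 2, ∀ t, k ≤ t → t < T → α.a i' t = 0 := by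
    intro i' t h1 h2
    have h := (hα t h2).1 i'
    have hA : (ev k j).A i' t = 0 := by
      simp only [ev]
      exact if_neg (Nat.not_lt.mpr h1)
    rw [hA] at h
    linarith [h.1, h.2.1]
  have hbz : ∀ t, k ≤ t → t < T → α.b i t = 0 := by
    intro t h1 h2
    have h := (hα t h2).1 i
    have hS : (ev k j).S i t = 0 := by
      simp only [ev]
      rw [if_neg (Nat.not_lt.mpr h1), if_neg (by tauto)]
    rw [hS] at h
    linarith [h.2.2.1, h.2.2.2]
  have hsplit : ∑ t ∈ Finset.range T, (α.a 0 t + α.a 1 t)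
      = ∑ t ∈ Finset.range k, (α.a 0 t + α.a 1 t) := by
    rw [Finset.range_eq_Ico, ← Finset.sum_Ico_consecutive _ (Nat.zero_le k) hkT,
      ← Finset.range_eq_Ico]
    have : ∑ t ∈ Finset.Ico k T, (α.a 0 t + α.a 1 t) = 0 := by
      apply Finset.sum_eq_zero
      intro t ht
      have ht' := Finset.mem_Ico.mp ht
      rw [haz 0 t ht'.1 ht'.2, haz 1 t ht'.1 ht'.2]
      ring
    rw [this, add_zero]
  have hQi : (∑ t ∈ Finset.range k, α.a i t) - (∑ t ∈ Finset.range k, α.b i t)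
      ≤ queue α i T := by
    have hq := sum_sub_le_queue α i T
    rw [Finset.range_eq_Ico, ← Finset.sum_Ico_consecutive _ (Nat.zero_le k) hkT,
      ← Finset.range_eq_Ico] at hq
    have hz : ∑ t ∈ Finset.Ico k T, (α.a i t - α.b i t) = 0 := by
      apply Finset.sum_eq_zero
      intro t ht
      have ht' := Finset.mem_Ico.mp ht
      rw [haz i t ht'.1 ht'.2, hbz t ht'.1 ht'.2]
      ring
    rw [hz, add_zero, Finset.sum_sub_distrib] at hq
    exact hq
  have hQj : 0 ≤ queue α j T := queue_nonneg α j T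
  have hQall : 0 ≤ queue α 0 T ∧ 0 ≤ queue α 1 T :=
    ⟨queue_nonneg α 0 T, queue_nonneg α 1 T⟩
  have hsum : ∑ t ∈ Finset.range k, (α.a 0 t + α.a 1 t)
      = (∑ t ∈ Finset.range k, α.a 0 t) + (∑ t ∈ Finset.range k, α.a 1 t) :=
    Finset.sum_add_distrib
  have hcase : (i = 0 ∧ j = 1) ∨ (i = 1 ∧ j = 0) := by
    fin_cases i <;> fin_cases j <;> simp_all
  rcases hcase with ⟨hi, hj⟩ | ⟨hi, hj⟩ <;> subst hi <;> subst hj <;>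
    rw [hsplit, hsum] <;> linarith [hQi, hQall.1, hQall.2]

/-- Theorem 2 (lower bound under the `W`-constrained adversary model): for every causal
policy in the two-link adversarial model with throughput utility, there is a
`W`-constrained event sequence (witnessed by a utility-optimal feasible action sequence
with total utility `2W`, empty final queues, and satisfying the `W`-window constraint)
on which the sum of the policy's utility regret and final total queue length is at
least `W/2`. -/
theorem lower_bound_W_constrained (W : ℕ) (hW : 0 < W) (hWeven : Even W)
    (T : ℕ) (hWT : W ≤ T)
    (π : EventSeq → ActionSeq)
    (hfeas : ∀ ω, Feasible T ω (π ω)) (hcausal : Causal π) :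
    ∃ ω : EventSeq,
      ((∃ α, Feasible T ω α ∧
          (∑ t ∈ Finset.range T, (α.a 0 t + α.a 1 t)) = 2 * (W : ℝ) ∧
          queue α 0 T = 0 ∧ queue α 1 T = 0 ∧
          (∀ i : Fin 2, ∀ t : ℕ, t + W ≤ T →
            (∑ τ ∈ Finset.Ico t (t + W), α.a i τ) ≤ ∑ τ ∈ Finset.Ico t (t + W), α.b i τ)) ∧
        (∀ α, Feasible T ω α →
          (∑ t ∈ Finset.range T, (α.a 0 t + α.a 1 t)) ≤ 2 * (W : ℝ))) ∧
      ((2 * (W : ℝ) - ∑ t ∈ Finset.range T, ((π ω).a 0 t + (π ω).a 1 t))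
          + queue (π ω) 0 T + queue (π ω) 1 T ≥ (W : ℝ) / 2) := by
  obtain ⟨k, hk'⟩ := hWeven
  have hk : W = 2 * k := by omega
  have hkT : k ≤ T := by omega
  have hWk : (W : ℝ) = 2 * (k : ℝ) := by rw [hk]; push_cast; ring
  -- the two candidate event sequences agree on phase 1, so the policy acts identically
  have hagree : ∀ t < k, ∀ i, (π (ev k 0)).a i t = (π (ev k 1)).a i t ∧
      (π (ev k 0)).b i t = (π (ev k 1)).b i t := by
    intro t ht i
    refine hcausal _ _ t ?_ i
    intro s hs i'
    refine ⟨rfl, ?_⟩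
    simp only [ev]
    rw [if_pos (lt_of_le_of_lt hs ht), if_pos (lt_of_le_of_lt hs ht)]
  have hb0 := policy_bound W k T hk hWT 0 1 (by decide) (π (ev k 0)) (hfeas (ev k 0))
  have hb1 := policy_bound W k T hk hWT 1 0 (by decide) (π (ev k 1)) (hfeas (ev k 1))
  have hxa : ∀ i, ∑ t ∈ Finset.range k, (π (ev k 1)).a i t
      = ∑ t ∈ Finset.range k, (π (ev k 0)).a i t :=
    fun i => Finset.sum_congr rfl
      (fun t ht => ((hagree t (Finset.mem_range.mp ht) i).1).symm)
  have hxb : ∀ i, ∑ t ∈ Finset.range k, (π (ev k 1)).b i t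
      = ∑ t ∈ Finset.range k, (π (ev k 0)).b i t :=
    fun i => Finset.sum_congr rfl
      (fun t ht => ((hagree t (Finset.mem_range.mp ht) i).2).symm)
  rw [hxa 1, hxb 0] at hb1
  -- total admission in phase 1 is at most 2W
  have hax : (∑ t ∈ Finset.range k, (π (ev k 0)).a 0 t)
      + (∑ t ∈ Finset.range k, (π (ev k 0)).a 1 t) ≤ 2 * (W : ℝ) := by
    rw [← Finset.sum_add_distrib]
    have hpt : ∀ t ∈ Finset.range k, (π (ev k 0)).a 0 t + (π (ev k 0)).a 1 t ≤ (4:ℝ) := by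
      intro t ht
      have htk := Finset.mem_range.mp ht
      have h := (hfeas (ev k 0) t (lt_of_lt_of_le htk hkT)).1
      have h0 := (h 0).2.1
      have h1 := (h 1).2.1
      rw [ev_A, if_pos htk] at h0
      rw [ev_A, if_pos htk] at h1
      linarith
    calc ∑ t ∈ Finset.range k, ((π (ev k 0)).a 0 t + (π (ev k 0)).a 1 t)
        ≤ ∑ _t ∈ Finset.range k, (4:ℝ) := Finset.sum_le_sum hpt
      _ = k * 4 := by rw [Finset.sum_const, Finset.card_range]; simp [mul_comm]
      _ ≤ 2 * (W : ℝ) := by rw [hWk]; ring_nf; linarith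
  -- total service in phase 1 is at most W
  have hsb : (∑ t ∈ Finset.range k, (π (ev k 0)).b 0 t)
      + (∑ t ∈ Finset.range k, (π (ev k 0)).b 1 t) ≤ (W : ℝ) := by
    rw [← Finset.sum_add_distrib]
    have hpt : ∀ t ∈ Finset.range k, (π (ev k 0)).b 0 t + (π (ev k 0)).b 1 t ≤ (2:ℝ) := by
      intro t ht
      have htk := Finset.mem_range.mp ht
      have h := hfeas (ev k 0) t (lt_of_lt_of_le htk hkT)
      have h0 := (h.1 0).2.2.2
      have h1 := (h.1 1).2.2.2
      rw [ev_S, if_pos htk] at h0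
      rw [ev_S, if_pos htk] at h1
      have hn0 := (h.1 0).2.2.1
      have hn1 := (h.1 1).2.2.1
      rcases h.2 with hz | hz <;> rw [hz] <;> linarith
    calc ∑ t ∈ Finset.range k, ((π (ev k 0)).b 0 t + (π (ev k 0)).b 1 t)
        ≤ ∑ _t ∈ Finset.range k, (2:ℝ) := Finset.sum_le_sum hpt
      _ = k * 2 := by rw [Finset.sum_const, Finset.card_range]; simp [mul_comm]
      _ ≤ (W : ℝ) := by rw [hWk]; linarith
  by_cases hch : (W : ℝ) / 2 ≤
      (2 * (W : ℝ) - ∑ t ∈ Finset.range T, ((π (ev k 0)).a 0 t + (π (ev k 0)).a 1 t))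
        + queue (π (ev k 0)) 0 T + queue (π (ev k 0)) 1 T
  · exact ⟨ev k 0, part_one W k T hk hWT 0, hch⟩
  · refine ⟨ev k 1, part_one W k T hk hWT 1, ?_⟩
    push_neg at hch
    have : (W : ℝ) ≤
        ((2 * (W : ℝ) - ∑ t ∈ Finset.range T, ((π (ev k 0)).a 0 t + (π (ev k 0)).a 1 t))
          + queue (π (ev k 0)) 0 T + queue (π (ev k 0)) 1 T)
        + ((2 * (W : ℝ) - ∑ t ∈ Finset.range T, ((π (ev k 1)).a 0 t + (π (ev k 1)).a 1 t))
          + queue (π (ev k 1)) 0 T + queue (π (ev k 1)) 1 T) := by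
      linarith [hb0, hb1, hax, hsb]
    linarith [hch]
end

section
/- Let N ≥ 1, B ≥ 0, V ≥ 0, V_T ≥ 0, W ≥ 1 and T ≥ 1. For each i ∈ {1,…,N} let Q_i, a_i, b_i, a*_i, b*_i satisfy Q_i(0) = 0, Q_i(t+1) = max(Q_i(t) + a_i(t) − b_i(t), 0), and 0 ≤ a_i(t), b_i(t), a*_i(t), b*_i(t) ≤ B for t ∈ {0,…,T−1}. Let U, U* take values in [U_min, U_max], suppose the Drift-plus-Penalty property holds at every slot t < T (Σ_{i} Q_i(t)(b_i(t) − a_i(t)) + V·U(t) ≥ Σ_{i} Q_i(t)(b*_i(t) − a*_i(t)) + V·U*(t)), and suppose the comparator satisfies the V_T-window constraint Σ_{τ=t}^{t+W−1} (a*_i(τ) − b*_i(τ)) ≤ V_T for every i and every t that is a multiple of W with t + W ≤ T. Then for every T' ≤ T that is a multiple of W, (Σ_{i=1}^N Q_i(T'))² / (2N) ≤ (V_T·T'/W) · max_{0 ≤ t ≤ T'} Σ_{i=1}^N Q_i(t) + V·T'·(U_max − U_min) + 7·N·B²·W·T'. -/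
/-!
With the Lyapunov function `L(t) = ∑ i, Q i t ^ 2`, the Lindley recursion gives
`L(t+1) - L(t) ≤ 2 ∑ Q_i (a_i - b_i) + N B²`, and the Drift-plus-Penalty property trades the
policy's action for the comparator's at a cost `2 V (U_max - U_min)`. Within a window of `W`
slots each queue moves by at most `W B`, so freezing the queue lengths at the start of the
window costs `N W² B²`, after which the `V_T`-window constraint bounds the comparator term by
`V_T ∑ i, Q i s ≤ V_T · max_t ∑ i, Q i t`. Summing over the `T' / W` windows and applying
Cauchy–Schwarz, `(∑ i, Q i T')² ≤ N L(T')`, gives the inequality.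
-/

open Finset

lemma sq_max_add_sub_zero_le {q a b B : ℝ} (hab : |a - b| ≤ B) :
    max (q + a - b) 0 ^ 2 ≤ q ^ 2 + 2 * (q * (a - b)) + B ^ 2 := by
  have hmax : max (q + a - b) 0 ^ 2 ≤ (q + a - b) ^ 2 := by
    rcases le_total (q + a - b) 0 with h | h
    · rw [max_eq_right h, sq, zero_mul]; exact sq_nonneg _
    · rw [max_eq_left h]
  have hsq : (a - b) ^ 2 ≤ B ^ 2 := by
    simpa only [sq_abs] using pow_le_pow_left₀ (abs_nonneg _) hab 2
  nlinarith

lemma abs_max_add_sub_zero_sub_le {q a b B : ℝ} (hq : 0 ≤ q) (hab : |a - b| ≤ B) :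
    |max (q + a - b) 0 - q| ≤ B := by
  calc |max (q + a - b) 0 - q| ≤ |q + a - b - q| := by
        simpa only [max_eq_left hq] using abs_max_sub_max_le_abs (q + a - b) q 0
    _ = |a - b| := by ring_nf
    _ ≤ B := hab

lemma abs_sub_le_of_abs_succ_sub_le {f : ℕ → ℝ} {B : ℝ} {m n : ℕ} (hmn : m ≤ n)
    (hf : ∀ t, m ≤ t → t < n → |f (t + 1) - f t| ≤ B) : |f n - f m| ≤ (n - m : ℕ) * B := by
  have h := dist_le_Ico_sum_of_dist_le (f := f) hmn (d := fun _ ↦ B)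
    fun h₁ h₂ ↦ by rw [Real.dist_eq, abs_sub_comm]; exact hf _ h₁ h₂
  simpa [Real.dist_eq, abs_sub_comm] using h

lemma sub_le_sum_Ico_of_succ_sub_le {f g : ℕ → ℝ} {m n : ℕ} (hmn : m ≤ n)
    (h : ∀ t ∈ Ico m n, f (t + 1) - f t ≤ g t) : f n - f m ≤ ∑ t ∈ Ico m n, g t :=
  (sum_Ico_sub f hmn).symm.le.trans (sum_le_sum h)

lemma sum_mul_le_of_abs_sub_le {ι : Type*} {s : Finset ι} {q c : ι → ℝ} {q₀ D B C : ℝ}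
    (hq₀ : 0 ≤ q₀) (hq : ∀ i ∈ s, |q i - q₀| ≤ D) (hc : ∀ i ∈ s, |c i| ≤ B)
    (hC : ∑ i ∈ s, c i ≤ C) : ∑ i ∈ s, q i * c i ≤ q₀ * C + #s * (D * B) := by
  have hdev : ∀ i ∈ s, (q i - q₀) * c i ≤ D * B := fun i hi ↦
    calc (q i - q₀) * c i ≤ |q i - q₀| * |c i| := by rw [← abs_mul]; exact le_abs_self _
      _ ≤ D * B := mul_le_mul (hq i hi) (hc i hi) (abs_nonneg _) ((abs_nonneg _).trans (hq i hi))
  calc ∑ i ∈ s, q i * c i = q₀ * ∑ i ∈ s, c i + ∑ i ∈ s, (q i - q₀) * c i := by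
        rw [mul_sum, ← sum_add_distrib]; congr 1 with i; ring
    _ ≤ q₀ * C + #s * (D * B) := by
        rw [← nsmul_eq_mul]
        exact add_le_add (mul_le_mul_of_nonneg_left hC hq₀) (sum_le_card_nsmul _ _ _ hdev)

lemma sq_sum_div_card_le_sum_sq {ι : Type*} (s : Finset ι) (f : ι → ℝ) :
    (∑ i ∈ s, f i) ^ 2 / #s ≤ ∑ i ∈ s, f i ^ 2 :=
  div_le_of_le_mul₀ (Nat.cast_nonneg _) (sum_nonneg fun _ _ ↦ sq_nonneg _)
    (by rw [mul_comm]; exact sq_sum_le_card_mul_sum_sq)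

lemma sum_mul_sub_le_of_drift_plus_penalty {ι : Type*} [Fintype ι] {q a b a' b' : ι → ℝ}
    {V u u' umin umax : ℝ} (hV : 0 ≤ V) (hu : u ≤ umax) (hu' : umin ≤ u')
    (h : ∑ i, q i * (b i - a i) + V * u ≥ ∑ i, q i * (b' i - a' i) + V * u') :
    ∑ i, q i * (a i - b i) ≤ ∑ i, q i * (a' i - b' i) + V * (umax - umin) := by
  have hVu : V * (u - u') ≤ V * (umax - umin) := mul_le_mul_of_nonneg_left (by linarith) hV
  simp only [mul_sub, sum_sub_distrib] at h ⊢
  linarith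

section Queue

variable {Q a b : ℕ → ℝ}

lemma queue_nonneg_s12 (hrec : ∀ t, Q (t + 1) = max (Q t + a t - b t) 0) (h0 : 0 ≤ Q 0) :
    ∀ t, 0 ≤ Q t
  | 0 => h0
  | t + 1 => hrec t ▸ le_max_right _ _

lemma abs_queue_sub_le (hrec : ∀ t, Q (t + 1) = max (Q t + a t - b t) 0) (h0 : 0 ≤ Q 0)
    {B : ℝ} (hB : 0 ≤ B) {T : ℕ} (hab : ∀ t < T, |a t - b t| ≤ B) {m n d : ℕ} (hmn : m ≤ n)
    (hnd : n ≤ m + d) (hnT : n ≤ T) : |Q n - Q m| ≤ d * B := by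
  have hstep := abs_sub_le_of_abs_succ_sub_le (f := Q) hmn fun t _ htn ↦ by
    rw [hrec]
    exact abs_max_add_sub_zero_sub_le (queue_nonneg_s12 hrec h0 t) (hab t (by omega))
  exact hstep.trans (mul_le_mul_of_nonneg_right (by norm_cast; omega) hB)

end Queue

noncomputable def lyapunov {ι : Type*} [Fintype ι] (Q : ι → ℕ → ℝ) (t : ℕ) : ℝ :=
  ∑ i, Q i t ^ 2

section Network

variable {ι : Type*} [Fintype ι] {Q a b a' b' : ι → ℕ → ℝ} {t : ℕ} {B : ℝ}

lemma lyapunov_succ_le (hrec : ∀ i, Q i (t + 1) = max (Q i t + a i t - b i t) 0)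
    (hab : ∀ i, |a i t - b i t| ≤ B) :
    lyapunov Q (t + 1) ≤
      lyapunov Q t + 2 * ∑ i, Q i t * (a i t - b i t) + Fintype.card ι * B ^ 2 := by
  calc lyapunov Q (t + 1) ≤ ∑ i, (Q i t ^ 2 + 2 * (Q i t * (a i t - b i t)) + B ^ 2) :=
        sum_le_sum fun i _ ↦ (hrec i).symm ▸ sq_max_add_sub_zero_le (hab i)
    _ = _ := by simp [lyapunov, sum_add_distrib, mul_sum]

lemma lyapunov_succ_sub_le {V u u' umin umax : ℝ}
    (hrec : ∀ i, Q i (t + 1) = max (Q i t + a i t - b i t) 0) (hab : ∀ i, |a i t - b i t| ≤ B)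
    (hV : 0 ≤ V) (hu : u ≤ umax) (hu' : umin ≤ u')
    (hdpp : ∑ i, Q i t * (b i t - a i t) + V * u ≥ ∑ i, Q i t * (b' i t - a' i t) + V * u') :
    lyapunov Q (t + 1) - lyapunov Q t ≤
      2 * ∑ i, Q i t * (a' i t - b' i t) + (2 * V * (umax - umin) + Fintype.card ι * B ^ 2) := by
  have := lyapunov_succ_le hrec hab
  have := sum_mul_sub_le_of_drift_plus_penalty hV hu hu' hdpp
  linarith

lemma sum_Ico_sum_mul_le {c : ι → ℕ → ℝ} {s W : ℕ} {D C : ℝ} (hQ : ∀ i, 0 ≤ Q i s)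
    (hQ_dev : ∀ i, ∀ t ∈ Ico s (s + W), |Q i t - Q i s| ≤ D)
    (hc : ∀ i, ∀ t ∈ Ico s (s + W), |c i t| ≤ B) (hC : ∀ i, ∑ t ∈ Ico s (s + W), c i t ≤ C) :
    ∑ t ∈ Ico s (s + W), ∑ i, Q i t * c i t ≤
      (∑ i, Q i s) * C + Fintype.card ι * (W * (D * B)) := by
  rw [sum_comm]
  calc ∑ i, ∑ t ∈ Ico s (s + W), Q i t * c i t ≤ ∑ i, (Q i s * C + W * (D * B)) :=
        sum_le_sum fun i _ ↦ by
          simpa using sum_mul_le_of_abs_sub_le (hQ i) (hQ_dev i) (hc i) (hC i)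
    _ = _ := by simp [sum_add_distrib, sum_mul]

lemma lyapunov_add_sub_le {c : ι → ℕ → ℝ} {G C : ℝ} {T s W : ℕ} (hB : 0 ≤ B)
    (hrec : ∀ i t, Q i (t + 1) = max (Q i t + a i t - b i t) 0) (hQ0 : ∀ i, 0 ≤ Q i 0)
    (hab : ∀ i, ∀ t < T, |a i t - b i t| ≤ B) (hc : ∀ i, ∀ t < T, |c i t| ≤ B)
    (hslot : ∀ t < T, lyapunov Q (t + 1) - lyapunov Q t ≤ 2 * ∑ i, Q i t * c i t + G)
    (hsT : s + W ≤ T) (hC : ∀ i, ∑ t ∈ Ico s (s + W), c i t ≤ C) :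
    lyapunov Q (s + W) - lyapunov Q s ≤
      2 * ((∑ i, Q i s) * C + Fintype.card ι * W ^ 2 * B ^ 2) + W * G := by
  have hdev i t (ht : t ∈ Ico s (s + W)) : |Q i t - Q i s| ≤ W * B := by
    rw [mem_Ico] at ht
    exact abs_queue_sub_le (hrec i) (hQ0 i) hB (hab i) ht.1 ht.2.le (by omega)
  have hwin := sum_Ico_sum_mul_le (fun i ↦ queue_nonneg_s12 (hrec i) (hQ0 i) s) hdev
    (fun i t ht ↦ hc i t (by rw [mem_Ico] at ht; omega)) hC
  calc lyapunov Q (s + W) - lyapunov Q s ≤ ∑ t ∈ Ico s (s + W), (2 * ∑ i, Q i t * c i t + G) :=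
        sub_le_sum_Ico_of_succ_sub_le (by omega) fun t ht ↦ hslot t (by rw [mem_Ico] at ht; omega)
    _ = 2 * ∑ t ∈ Ico s (s + W), ∑ i, Q i t * c i t + W * G := by
        simp [sum_add_distrib, mul_sum]
    _ ≤ _ := by linarith

end Network

theorem DPP_quadratic_ineq_VT_general (N : ℕ) (B : ℝ) (hB : 0 ≤ B)
    (V : ℝ) (hV : 0 ≤ V) (VT : ℝ) (hVT : 0 ≤ VT) (W T : ℕ) (hW : 1 ≤ W)
    (Q a b astar bstar : Fin N → ℕ → ℝ) (U Ustar : ℕ → ℝ) (Umin Umax : ℝ)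
    (hQ0 : ∀ i, Q i 0 = 0)
    (hrec : ∀ i t, Q i (t + 1) = max (Q i t + a i t - b i t) 0)
    (hbnd : ∀ i, ∀ t < T, (0 ≤ a i t ∧ a i t ≤ B) ∧ (0 ≤ b i t ∧ b i t ≤ B) ∧
      (0 ≤ astar i t ∧ astar i t ≤ B) ∧ (0 ≤ bstar i t ∧ bstar i t ≤ B))
    (hU : ∀ t < T, Umin ≤ U t ∧ U t ≤ Umax)
    (hUstar : ∀ t < T, Umin ≤ Ustar t ∧ Ustar t ≤ Umax)
    (hDPP : ∀ t < T, (∑ i, Q i t * (b i t - a i t)) + V * U t ≥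
      (∑ i, Q i t * (bstar i t - astar i t)) + V * Ustar t)
    (hwindow : ∀ t : ℕ, W ∣ t → t + W ≤ T → ∀ i,
      (∑ τ ∈ Finset.Ico t (t + W), (astar i τ - bstar i τ)) ≤ VT)
    (T' : ℕ) (hT' : T' ≤ T) (hWT' : W ∣ T') :
    (∑ i, Q i T') ^ 2 / (2 * (N : ℝ)) ≤
      (VT * (T' : ℝ) / (W : ℝ)) *
        ((Finset.range (T' + 1)).sup' Finset.nonempty_range_add_one (fun t => ∑ i, Q i t))
      + V * (T' : ℝ) * (Umax - Umin) + 7 * (N : ℝ) * B ^ 2 * (W : ℝ) * (T' : ℝ) := by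
  obtain ⟨K, rfl⟩ := hWT'
  set M := (range (W * K + 1)).sup' nonempty_range_add_one fun t ↦ ∑ i, Q i t
  set G := 2 * V * (Umax - Umin) + N * B ^ 2
  have hab i t (ht : t < T) : |a i t - b i t| ≤ B :=
    have h := hbnd i t ht; abs_sub_le_of_nonneg_of_le h.1.1 h.1.2 h.2.1.1 h.2.1.2
  have habstar i t (ht : t < T) : |astar i t - bstar i t| ≤ B :=
    have h := hbnd i t ht; abs_sub_le_of_nonneg_of_le h.2.2.1.1 h.2.2.1.2 h.2.2.2.1 h.2.2.2.2
  have hslot t (ht : t < T) : lyapunov Q (t + 1) - lyapunov Q t ≤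
      2 * ∑ i, Q i t * (astar i t - bstar i t) + G := by
    simpa using lyapunov_succ_sub_le (hrec · t) (hab · t ht) hV (hU t ht).2 (hUstar t ht).1
      (hDPP t ht)
  have hframe k (hk : k ∈ range K) : lyapunov Q (W * (k + 1)) - lyapunov Q (W * k) ≤
      2 * (M * VT + N * W ^ 2 * B ^ 2) + W * G := by
    have hkK : W * k + W ≤ W * K := by rw [mem_range] at hk; nlinarith
    have hM : ∑ i, Q i (W * k) ≤ M := le_sup' (fun t ↦ ∑ i, Q i t) (by simp; omega)
    have h := lyapunov_add_sub_le hB hrec (hQ0 · |>.ge) hab habstar hslot (by omega)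
      (hwindow (W * k) (dvd_mul_right _ _) (by omega))
    rw [Fintype.card_fin, ← mul_add_one] at h
    linarith [mul_le_mul_of_nonneg_right hM hVT]
  have hL : lyapunov Q (W * K) ≤ K * (2 * (M * VT + N * W ^ 2 * B ^ 2) + W * G) := by
    have h := (sum_range_sub (fun k ↦ lyapunov Q (W * k)) K).symm.le.trans
      (sum_le_card_nsmul _ _ _ hframe)
    simpa [lyapunov, hQ0, mul_add] using h
  have hCS : (∑ i, Q i (W * K)) ^ 2 / N ≤ lyapunov Q (W * K) := by
    simpa [lyapunov] using sq_sum_div_card_le_sum_sq univ fun i ↦ Q i (W * K)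
  have hW1 : (1 : ℝ) ≤ W := by exact_mod_cast hW
  have hNBKW : 0 ≤ N * B ^ 2 * (K * W) := by positivity
  rw [mul_comm 2, ← div_div, Nat.cast_mul, mul_div_assoc, mul_div_cancel_left₀ _ (by positivity)]
  -- the `B²` terms add up to `N B² W T' + N B² T' / 2 ≤ 7 N B² W T'`, as `W ≥ 1`
  nlinarith

/-- Quadratic inequality for the peak queue length of the Drift-plus-Penalty algorithm
under the `V_T`-constrained adversary model (derived from eq:general-1 in Appendix E). -/
theorem DPP_quadratic_ineq_VT (N : ℕ) (hN : 1 ≤ N) (B : ℝ) (hB : 0 ≤ B)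
    (V : ℝ) (hV : 0 ≤ V) (VT : ℝ) (hVT : 0 ≤ VT) (W T : ℕ) (hW : 1 ≤ W) (hT : 1 ≤ T)
    (Q a b astar bstar : Fin N → ℕ → ℝ) (U Ustar : ℕ → ℝ) (Umin Umax : ℝ)
    (hQ0 : ∀ i, Q i 0 = 0)
    (hrec : ∀ i t, Q i (t + 1) = max (Q i t + a i t - b i t) 0)
    (hbnd : ∀ i, ∀ t < T, (0 ≤ a i t ∧ a i t ≤ B) ∧ (0 ≤ b i t ∧ b i t ≤ B) ∧
      (0 ≤ astar i t ∧ astar i t ≤ B) ∧ (0 ≤ bstar i t ∧ bstar i t ≤ B))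
    (hU : ∀ t < T, Umin ≤ U t ∧ U t ≤ Umax)
    (hUstar : ∀ t < T, Umin ≤ Ustar t ∧ Ustar t ≤ Umax)
    (hDPP : ∀ t < T, (∑ i, Q i t * (b i t - a i t)) + V * U t ≥
      (∑ i, Q i t * (bstar i t - astar i t)) + V * Ustar t)
    (hwindow : ∀ t : ℕ, W ∣ t → t + W ≤ T → ∀ i,
      (∑ τ ∈ Finset.Ico t (t + W), (astar i τ - bstar i τ)) ≤ VT)
    (T' : ℕ) (hT' : T' ≤ T) (hWT' : W ∣ T') :
    (∑ i, Q i T') ^ 2 / (2 * (N : ℝ)) ≤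
      (VT * (T' : ℝ) / (W : ℝ)) *
        ((Finset.range (T' + 1)).sup' Finset.nonempty_range_add_one (fun t => ∑ i, Q i t))
      + V * (T' : ℝ) * (Umax - Umin) + 7 * (N : ℝ) * B ^ 2 * (W : ℝ) * (T' : ℝ) :=
  DPP_quadratic_ineq_VT_general N B hB V hV VT hVT W T hW Q a b astar bstar U Ustar Umin Umax hQ0
    hrec hbnd hU hUstar hDPP hwindow T' hT' hWT'
end
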